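/- (Proposition 1(ii), case |Q| = |R| = 2.) Suppose Assumption 1 holds, i.e. P₁ > min(P₂·a₁, P₂·a₂) and P₂ > min(P₁·a₁, P₁·a₂). Then the 2×2 hospital game has a Nash equilibrium in which the two players choose different strategies: either the profile where q₁ plays r₁ and q₂ plays r₂, or the profile where q₁ plays r₂ and q₂ plays r₁, is a Nash equilibrium. -/

import Mathlib

/-- The two wards a hospital can choose to make excel. -/
inductive Ward : Type
  | r1 | r2
deriving DecidableEq

open Ward

/-- The size of the patient group associated with a ward. -/
def grp (P1 P2 : ℝ) : Ward → ℝ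
  | r1 => P1
  | r2 => P2

/-- Payoff of hospital q₁ when q₁ chooses `s1` and q₂ chooses `s2`:
if both choose the same ward, q₁ gets the fraction `a1` of that ward's group;
otherwise q₁ gets the full group of its chosen ward. -/
def pay1 (P1 P2 a1 : ℝ) (s1 s2 : Ward) : ℝ :=
  if s1 = s2 then grp P1 P2 s1 * a1 else grp P1 P2 s1

/-- Payoff of hospital q₂ when q₁ chooses `s1` and q₂ chooses `s2`:
if both choose the same ward, q₂ gets the fraction `a2` of that ward's group;
otherwise q₂ gets the full group of its chosen ward. -/
def pay2 (P1 P2 a2 : ℝ) (s1 s2 : Ward) : ℝ :=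
  if s1 = s2 then grp P1 P2 s2 * a2 else grp P1 P2 s2

/-- A strategy profile `(s1, s2)` is a Nash equilibrium if neither hospital can
strictly increase its payoff by unilaterally changing its strategy. -/
def IsNash (P1 P2 a1 a2 : ℝ) (s1 s2 : Ward) : Prop :=
  (∀ t1 : Ward, pay1 P1 P2 a1 t1 s2 ≤ pay1 P1 P2 a1 s1 s2) ∧
  (∀ t2 : Ward, pay2 P1 P2 a2 s1 t2 ≤ pay2 P1 P2 a2 s1 s2)

/-!
If q₁ would rather join q₂ on r₂ (P₂a₁ > P₁), Assumption 1 forces P₂a₂ < P₁, while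
P₁a₁ ≤ P₁ < P₂a₁ ≤ P₂; so the swapped profile (r₂, r₁) is an equilibrium. The case where q₂
would rather join q₁ on r₁ is the same argument with the roles of wards and hospitals exchanged.
-/

theorem isNash_r1_r2_iff (P1 P2 a1 a2 : ℝ) :
    IsNash P1 P2 a1 a2 r1 r2 ↔ P2 * a1 ≤ P1 ∧ P1 * a2 ≤ P2 := by
  constructor
  · rintro ⟨h1, h2⟩
    simpa [pay1, pay2, grp] using And.intro (h1 r2) (h2 r1)
  · rintro ⟨h1, h2⟩
    refine ⟨fun t => ?_, fun t => ?_⟩ <;> cases t <;> simp [pay1, pay2, grp, h1, h2]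

theorem isNash_r2_r1_iff (P1 P2 a1 a2 : ℝ) :
    IsNash P1 P2 a1 a2 r2 r1 ↔ P1 * a1 ≤ P2 ∧ P2 * a2 ≤ P1 := by
  constructor
  · rintro ⟨h1, h2⟩
    simpa [pay1, pay2, grp] using And.intro (h1 r1) (h2 r2)
  · rintro ⟨h1, h2⟩
    refine ⟨fun t => ?_, fun t => ?_⟩ <;> cases t <;> simp [pay1, pay2, grp, h1, h2]

theorem mul_le_and_mul_le_of_min_lt_of_lt_mul {x y a b : ℝ} (hx : 0 ≤ x) (hy : 0 ≤ y)
    (ha : a ≤ 1) (hmin : min (y * a) (y * b) < x) (hlt : x < y * a) :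
    x * a ≤ y ∧ y * b ≤ x := by
  refine ⟨?_, ?_⟩
  · calc x * a ≤ x := mul_le_of_le_one_right hx ha
      _ ≤ y * a := hlt.le
      _ ≤ y := mul_le_of_le_one_right hy ha
  · exact ((min_lt_iff.mp hmin).resolve_left hlt.not_gt).le

/-- Proposition 1(ii), case |Q| = |R| = 2: under Assumption 1, the game has a
Nash equilibrium in which the two hospitals choose different strategies. -/
theorem stmt4 (P1 P2 a1 a2 : ℝ)
    (hP1 : 0 < P1) (hP2 : 0 < P2) (ha1 : 0 < a1) (ha2 : 0 < a2)
    (hsum : a1 + a2 = 1)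
    (hA1 : P1 > min (P2 * a1) (P2 * a2))
    (hA2 : P2 > min (P1 * a1) (P1 * a2)) :
    IsNash P1 P2 a1 a2 r1 r2 ∨ IsNash P1 P2 a1 a2 r2 r1 := by
  rw [isNash_r1_r2_iff, isNash_r2_r1_iff]
  by_cases h : P2 * a1 ≤ P1 ∧ P1 * a2 ≤ P2
  · exact Or.inl h
  refine Or.inr ?_
  rcases not_and_or.mp h with h | h
  · exact mul_le_and_mul_le_of_min_lt_of_lt_mul hP1.le hP2.le (by linarith) hA1 (not_le.mp h)
  · exact (mul_le_and_mul_le_of_min_lt_of_lt_mul hP2.le hP1.le (by linarith)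
      ((min_comm _ _).trans_lt hA2) (not_le.mp h)).symm
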